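/- arXiv:1810.09132 — 4 statements merged into one kernel-verified Lean document; each statement's English description precedes it below -/
import Mathlib

section
/- Let Σ be a finite set of modes. Suppose that for every j ∈ Σ: (i) the design LMI matrix M_j is positive definite; (ii) P B¹_j = B¹_j V_j where V_j ∈ ℝ^{m×m} is invertible; and set the output-feedback gain K_j = V_j⁻¹ U_j. Then for every j ∈ Σ the closed-loop dissipation matrix Γ_j formed with Â_j = A_j + B¹_j H + B¹_j K_j C_j and B̂_j = B²_j + B¹_j K_j D_j is positive definite; equivalently, the closed-loop linearized switched system in every mode is QSR-state strictly input dissipative with the common quadratic storage function V(x) = x'Px. -/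
/-!
Once the gain satisfies `P B¹ K = B¹ U` (this is what `P B¹ = B¹ V` and `K = V⁻¹ U` give) and
`Q = -L²`, the closed-loop matrix Γ is exactly the congruence `Tᵀ M T` of the design LMI matrix
by `T : (x, w) ↦ (x, w, L (C x + D w))`: the blocks `-C'L`, `-D'L` and `I` of `M` complete the
square `-(Ly)'(Ly) = y'Qy`. As `T` keeps `(x, w)`, it is injective, so `M ≻ 0` gives `Γ ≻ 0`.
-/

open Matrix

/-- The closed-loop dissipation matrix Γ: a symmetric 2×2 block matrix with blocks
Γ₁₁ = C'QC − PÂ − Â'P, Γ₁₂ = C'QD + C'S − PB̂, Γ₂₂ = D'QD + D'S + S'D + R. -/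
noncomputable def dissipationMatrix {n p q : ℕ}
    (P Ahat : Matrix (Fin n) (Fin n) ℝ) (Bhat : Matrix (Fin n) (Fin p) ℝ)
    (C : Matrix (Fin q) (Fin n) ℝ) (D : Matrix (Fin q) (Fin p) ℝ)
    (Q : Matrix (Fin q) (Fin q) ℝ) (S : Matrix (Fin q) (Fin p) ℝ)
    (R : Matrix (Fin p) (Fin p) ℝ) :
    Matrix (Fin n ⊕ Fin p) (Fin n ⊕ Fin p) ℝ :=
  Matrix.fromBlocks
    (Cᵀ * Q * C - P * Ahat - Ahatᵀ * P)
    (Cᵀ * Q * D + Cᵀ * S - P * Bhat)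
    ((Cᵀ * Q * D + Cᵀ * S - P * Bhat)ᵀ)
    (Dᵀ * Q * D + Dᵀ * S + Sᵀ * D + R)

/-- The design LMI matrix M: a symmetric 3×3 block matrix with blocks
M₁₁ = −P(A + B¹H) − (A + B¹H)'P − B¹UC − C'U'(B¹)', M₁₂ = −PB² − B¹UD + C'S,
M₁₃ = −C'L, M₂₂ = D'S + S'D + R, M₂₃ = −D'L, M₃₃ = I, where L is symmetric
with LL = −Q. -/
noncomputable def designLMI {n m p q : ℕ}
    (P A : Matrix (Fin n) (Fin n) ℝ) (B1 : Matrix (Fin n) (Fin m) ℝ)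
    (B2 : Matrix (Fin n) (Fin p) ℝ) (C : Matrix (Fin q) (Fin n) ℝ)
    (D : Matrix (Fin q) (Fin p) ℝ) (H : Matrix (Fin m) (Fin n) ℝ)
    (U : Matrix (Fin m) (Fin q) ℝ) (S : Matrix (Fin q) (Fin p) ℝ)
    (R : Matrix (Fin p) (Fin p) ℝ) (L : Matrix (Fin q) (Fin q) ℝ) :
    Matrix (Fin n ⊕ (Fin p ⊕ Fin q)) (Fin n ⊕ (Fin p ⊕ Fin q)) ℝ :=
  Matrix.fromBlocks
    (-(P * (A + B1 * H)) - (A + B1 * H)ᵀ * P - B1 * U * C - Cᵀ * Uᵀ * B1ᵀ)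
    (Matrix.fromCols (-(P * B2) - B1 * U * D + Cᵀ * S) (-(Cᵀ * L)))
    (Matrix.fromRows ((-(P * B2) - B1 * U * D + Cᵀ * S)ᵀ) ((-(Cᵀ * L))ᵀ))
    (Matrix.fromBlocks (Dᵀ * S + Sᵀ * D + R) (-(Dᵀ * L)) ((-(Dᵀ * L))ᵀ) 1)

section Congruence

variable {α n p q : Type*} [Semiring α] [Fintype n] [Fintype p] [Fintype q]
  [DecidableEq n] [DecidableEq p]

def designLMICongruence (C : Matrix q n α) (D : Matrix q p α) (L : Matrix q q α) :
    Matrix (n ⊕ (p ⊕ q)) (n ⊕ p) α :=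
  fromBlocks 1 0 (fromRows 0 (L * C)) (fromRows 1 (L * D))

theorem designLMICongruence_mulVec_injective (C : Matrix q n α) (D : Matrix q p α)
    (L : Matrix q q α) : Function.Injective (designLMICongruence C D L).mulVec := by
  intro v w h
  ext (i | i)
  · simpa [designLMICongruence, fromBlocks_mulVec] using congrFun h (Sum.inl i)
  · simpa [designLMICongruence, fromBlocks_mulVec] using congrFun h (Sum.inr (Sum.inl i))

end Congruence

theorem dissipationMatrix_closedLoop_eq {n m p q : ℕ}
    {P A : Matrix (Fin n) (Fin n) ℝ} {B1 : Matrix (Fin n) (Fin m) ℝ}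
    {B2 : Matrix (Fin n) (Fin p) ℝ} {C : Matrix (Fin q) (Fin n) ℝ}
    {D : Matrix (Fin q) (Fin p) ℝ} {H : Matrix (Fin m) (Fin n) ℝ}
    {U K : Matrix (Fin m) (Fin q) ℝ} {Q L : Matrix (Fin q) (Fin q) ℝ}
    {S : Matrix (Fin q) (Fin p) ℝ} {R : Matrix (Fin p) (Fin p) ℝ}
    (hP : Pᵀ = P) (hL : Lᵀ = L) (hLL : L * L = -Q) (hK : P * (B1 * K) = B1 * U) :
    dissipationMatrix P (A + B1 * H + B1 * K * C) (B2 + B1 * K * D) C D Q S R =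
      (designLMICongruence C D L)ᵀ * designLMI P A B1 B2 C D H U S R L *
        designLMICongruence C D L := by
  obtain rfl : Q = -(L * L) := by rw [hLL, neg_neg]
  have hKX {k : Type} (X : Matrix (Fin q) k ℝ) : P * (B1 * (K * X)) = B1 * (U * X) := by
    rw [← Matrix.mul_assoc B1, ← Matrix.mul_assoc P, hK, Matrix.mul_assoc]
  have hKt : Kᵀ * (B1ᵀ * P) = Uᵀ * B1ᵀ := by
    simpa only [transpose_mul, hP, Matrix.mul_assoc] using congrArg transpose hK
  simp only [dissipationMatrix, designLMI, designLMICongruence, fromBlocks_transpose,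
    transpose_fromRows, transpose_zero, transpose_one, fromBlocks_multiply,
    fromCols_mul_fromRows, fromCols_mul_fromBlocks, Matrix.mul_one, Matrix.one_mul,
    Matrix.mul_zero, Matrix.zero_mul, zero_add, Matrix.mul_add, Matrix.add_mul]
  congr 1 <;>
  · simp only [transpose_add, transpose_sub, transpose_neg, transpose_mul, transpose_transpose,
      hP, hL, Matrix.add_mul, Matrix.neg_mul, Matrix.mul_neg, Matrix.mul_assoc, hKX, hKt]
    abel

theorem closed_loop_dissipation_of_design_LMI_general
    {n m p q : ℕ} {ι : Type*}
    (P : Matrix (Fin n) (Fin n) ℝ)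
    (A : ι → Matrix (Fin n) (Fin n) ℝ)
    (B1 : ι → Matrix (Fin n) (Fin m) ℝ)
    (B2 : ι → Matrix (Fin n) (Fin p) ℝ)
    (C : ι → Matrix (Fin q) (Fin n) ℝ)
    (D : ι → Matrix (Fin q) (Fin p) ℝ)
    (H : Matrix (Fin m) (Fin n) ℝ)
    (U : ι → Matrix (Fin m) (Fin q) ℝ)
    (V : ι → Matrix (Fin m) (Fin m) ℝ)
    (Q : ι → Matrix (Fin q) (Fin q) ℝ)
    (S : ι → Matrix (Fin q) (Fin p) ℝ)
    (R : ι → Matrix (Fin p) (Fin p) ℝ)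
    (L : ι → Matrix (Fin q) (Fin q) ℝ)
    (hP : P.PosDef)
    (hLsym : ∀ j, (L j).IsSymm)
    (hLL : ∀ j, L j * L j = -(Q j))
    (hM : ∀ j, (designLMI P (A j) (B1 j) (B2 j) (C j) (D j) H (U j) (S j)
      (R j) (L j)).PosDef)
    (hPB : ∀ j, P * B1 j = B1 j * V j)
    (hV : ∀ j, IsUnit (V j)) :
    ∀ j, (dissipationMatrix P
      (A j + B1 j * H + B1 j * ((V j)⁻¹ * U j) * C j)
      (B2 j + B1 j * ((V j)⁻¹ * U j) * D j)
      (C j) (D j) (Q j) (S j) (R j)).PosDef := by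
  intro j
  have hPsymm : Pᵀ = P := (isHermitian_iff_isSymm.mp hP.1).eq
  have hK : P * (B1 j * ((V j)⁻¹ * U j)) = B1 j * U j := by
    rw [← Matrix.mul_assoc, hPB j, Matrix.mul_assoc, ← Matrix.mul_assoc (V j),
      mul_nonsing_inv _ ((isUnit_iff_isUnit_det _).mp (hV j)), Matrix.one_mul]
  rw [dissipationMatrix_closedLoop_eq hPsymm (hLsym j).eq (hLL j) hK,
    ← conjTranspose_eq_transpose_of_trivial]
  exact (hM j).conjTranspose_mul_mul_same (designLMICongruence_mulVec_injective _ _ _)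

/-- If for every mode j the design LMI matrix M_j is positive
definite and P B¹_j = B¹_j V_j with V_j invertible, then with the gain
K_j = V_j⁻¹ U_j, the closed-loop dissipation matrix Γ_j built from
Â_j = A_j + B¹_jH + B¹_jK_jC_j and B̂_j = B²_j + B¹_jK_jD_j is positive
definite in every mode, i.e. the closed-loop linearized switched system is
QSR-state strictly input dissipative with storage V(x) = x'Px. -/
theorem closed_loop_dissipation_of_design_LMI
    {n m p q : ℕ} {ι : Type*} [Fintype ι]
    (P : Matrix (Fin n) (Fin n) ℝ)
    (A : ι → Matrix (Fin n) (Fin n) ℝ)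
    (B1 : ι → Matrix (Fin n) (Fin m) ℝ)
    (B2 : ι → Matrix (Fin n) (Fin p) ℝ)
    (C : ι → Matrix (Fin q) (Fin n) ℝ)
    (D : ι → Matrix (Fin q) (Fin p) ℝ)
    (H : Matrix (Fin m) (Fin n) ℝ)
    (U : ι → Matrix (Fin m) (Fin q) ℝ)
    (V : ι → Matrix (Fin m) (Fin m) ℝ)
    (Q : ι → Matrix (Fin q) (Fin q) ℝ)
    (S : ι → Matrix (Fin q) (Fin p) ℝ)
    (R : ι → Matrix (Fin p) (Fin p) ℝ)
    (L : ι → Matrix (Fin q) (Fin q) ℝ)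
    (hP : P.PosDef)
    (hQsym : ∀ j, (Q j).IsSymm)
    (hQneg : ∀ j, (-(Q j)).PosDef)
    (hRsym : ∀ j, (R j).IsSymm)
    (hLsym : ∀ j, (L j).IsSymm)
    (hLL : ∀ j, L j * L j = -(Q j))
    (hM : ∀ j, (designLMI P (A j) (B1 j) (B2 j) (C j) (D j) H (U j) (S j)
      (R j) (L j)).PosDef)
    (hPB : ∀ j, P * B1 j = B1 j * V j)
    (hV : ∀ j, IsUnit (V j)) :
    ∀ j, (dissipationMatrix P
      (A j + B1 j * H + B1 j * ((V j)⁻¹ * U j) * C j)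
      (B2 j + B1 j * ((V j)⁻¹ * U j) * D j)
      (C j) (D j) (Q j) (S j) (R j)).PosDef :=
  closed_loop_dissipation_of_design_LMI_general P A B1 B2 C D H U V Q S R L hP hLsym hLL hM hPB hV
end

section
/- Let Σ be a finite set, and for each j ∈ Σ let Q_j ∈ ℝ^{q×q} be symmetric negative definite, S_j ∈ ℝ^{q×p}, and R_j ∈ ℝ^{p×p} symmetric. Then there exist constants a > 0 and b > 0, depending only on the family {Q_j, S_j, R_j : j ∈ Σ}, with the following property: for every T > 0, every switching signal σ : [0,T] → Σ, every continuous y : [0,T] → ℝ^q and w : [0,T] → ℝ^p, every x : [0,T] → ℝ^n, and every nonnegative function V : ℝ^n → ℝ such that t ↦ V(x(t)) is differentiable on [0,T] and satisfies d/dt V(x(t)) ≤ y(t)'Q_{σ(t)}y(t) + 2 y(t)'S_{σ(t)}w(t) + w(t)'R_{σ(t)}w(t) for all t ∈ [0,T], it holds that ∫₀ᵀ ‖y(t)‖² dt ≤ a ∫₀ᵀ ‖w(t)‖² dt + b V(x(0)). In particular, a QSR-dissipative switched system with Q_j negative definite in every mode is L2-stable under arbitrary switching. -/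
/-!
Negative definiteness of every `Q_j` gives a common `ε > 0` with `y'Q_j y ≤ -ε‖y‖²` (compactness of
the unit sphere, then finiteness of the mode set). Young's inequality absorbs the cross term
`2 y'S_j w` into `(ε/2)‖y‖²` at the cost of a multiple of `‖w‖²`, so the supply rate is at most
`-(ε/2)‖y‖² + K‖w‖²` uniformly in the mode. Integrating the dissipation inequality over `[0, T]`
and dropping `V(x(T)) ≥ 0` yields `(ε/2)∫‖y‖² ≤ K∫‖w‖² + V(x(0))`.
-/

open Matrix Set

lemma Finite.exists_pos_forall_le {ι : Type*} [Finite ι] {f : ι → ℝ} (hf : ∀ i, 0 < f i) :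
    ∃ ε > 0, ∀ i, ε ≤ f i := by
  obtain ⟨M, hM⟩ := Finite.exists_le fun i => (f i)⁻¹
  refine ⟨(max M 1)⁻¹, by positivity, fun i => ?_⟩
  rw [inv_le_comm₀ (by positivity) (hf i)]
  exact (hM i).trans (le_max_left M 1)

section QuadraticBounds

variable {m n : Type*} [Fintype m] [Fintype n]

lemma dotProduct_self_nonneg (v : n → ℝ) : 0 ≤ v ⬝ᵥ v :=
  Finset.sum_nonneg fun i _ => mul_self_nonneg (v i)

lemma mul_self_le_dotProduct_self (v : n → ℝ) (i : n) : v i * v i ≤ v ⬝ᵥ v :=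
  Finset.single_le_sum (f := fun j => v j * v j) (fun j _ => mul_self_nonneg (v j))
    (Finset.mem_univ i)

lemma two_mul_dotProduct_le {δ : ℝ} (hδ : 0 < δ) (u v : n → ℝ) :
    2 * (u ⬝ᵥ v) ≤ δ * (u ⬝ᵥ u) + δ⁻¹ * (v ⬝ᵥ v) := by
  simp only [dotProduct, Finset.mul_sum, ← Finset.sum_add_distrib]
  gcongr with i
  -- `δa² + δ⁻¹b² - 2ab = δ⁻¹(δa - b)²`
  have hsq : 0 ≤ δ⁻¹ * (δ * u i - v i) ^ 2 := by positivity
  field_simp at hsq ⊢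
  nlinarith

lemma mulVec_dotProduct_self_le (M : Matrix m n ℝ) (v : n → ℝ) :
    (M *ᵥ v) ⬝ᵥ (M *ᵥ v) ≤ (∑ i, ∑ j, M i j ^ 2) * (v ⬝ᵥ v) := by
  simp only [dotProduct, mulVec, ← sq, Finset.sum_mul]
  gcongr with i
  rw [← Finset.sum_mul]
  exact Finset.sum_mul_sq_le_sq_mul_sq _ _ _

lemma Matrix.PosDef.exists_pos_mul_dotProduct_self_le {A : Matrix n n ℝ} (hA : A.PosDef) :
    ∃ ε > 0, ∀ v, ε * (v ⬝ᵥ v) ≤ v ⬝ᵥ (A *ᵥ v) := by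
  have hsphere : IsCompact {u : n → ℝ | u ⬝ᵥ u = 1} := by
    refine Metric.isCompact_of_isClosed_isBounded (isClosed_eq (by fun_prop) continuous_const) ?_
    refine (Metric.isBounded_closedBall (x := 0) (r := 1)).subset fun u hu => ?_
    rw [mem_closedBall_zero_iff, pi_norm_le_iff_of_nonneg zero_le_one]
    intro i
    rw [Real.norm_eq_abs, abs_le_one_iff_mul_self_le_one]
    exact (mul_self_le_dotProduct_self u i).trans_eq hu
  obtain ⟨ε, hε, hεle⟩ := hsphere.exists_forall_le' (f := fun u => u ⬝ᵥ (A *ᵥ u)) (a := 0)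
    (by fun_prop) fun u hu => by
      simpa using hA.dotProduct_mulVec_pos (x := u) (by rintro rfl; simp at hu)
  refine ⟨ε, hε, fun v => ?_⟩
  rcases eq_or_ne v 0 with rfl | hv
  · simp
  set c := √(v ⬝ᵥ v)
  have hc_sq : c ^ 2 = v ⬝ᵥ v := Real.sq_sqrt (dotProduct_self_nonneg v)
  have hc : 0 < c :=
    Real.sqrt_pos.2 ((dotProduct_self_nonneg v).lt_of_ne' (dotProduct_self_eq_zero.not.2 hv))
  have hunit := hεle (c⁻¹ • v) (by
    simp only [mem_ofPred_eq, smul_dotProduct, dotProduct_smul, smul_eq_mul, ← hc_sq]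
    field_simp)
  simp only [mulVec_smul, smul_dotProduct, dotProduct_smul, smul_eq_mul] at hunit
  rw [← hc_sq]
  field_simp at hunit
  linarith

def qsrSupplyRate (Q : Matrix m m ℝ) (S : Matrix m n ℝ) (R : Matrix n n ℝ) (y : m → ℝ)
    (w : n → ℝ) : ℝ :=
  y ⬝ᵥ (Q *ᵥ y) + 2 * (y ⬝ᵥ (S *ᵥ w)) + w ⬝ᵥ (R *ᵥ w)

lemma qsrSupplyRate_le {Q : Matrix m m ℝ} (S : Matrix m n ℝ) (R : Matrix n n ℝ) {ε : ℝ}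
    (hε : 0 < ε) (hQ : ∀ y, y ⬝ᵥ (Q *ᵥ y) ≤ -ε * (y ⬝ᵥ y)) (y : m → ℝ) (w : n → ℝ) :
    qsrSupplyRate Q S R y w ≤
      -(ε / 2) * (y ⬝ᵥ y) +
        (2 / ε * ∑ i, ∑ j, S i j ^ 2 + (1 + ∑ i, ∑ j, R i j ^ 2) / 2) * (w ⬝ᵥ w) := by
  have hcross := two_mul_dotProduct_le (half_pos hε) y (S *ᵥ w)
  have hS := mulVec_dotProduct_self_le S w
  have hRw := two_mul_dotProduct_le one_pos w (R *ᵥ w)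
  have hR := mulVec_dotProduct_self_le R w
  rw [inv_div] at hcross
  rw [inv_one] at hRw
  have hS' := mul_le_mul_of_nonneg_left hS (by positivity : (0 : ℝ) ≤ 2 / ε)
  unfold qsrSupplyRate
  linarith [hQ y]

lemma exists_forall_qsrSupplyRate_le {ι : Type*} [Finite ι] (Q : ι → Matrix m m ℝ)
    (S : ι → Matrix m n ℝ) (R : ι → Matrix n n ℝ) (hQ : ∀ j, (-(Q j)).PosDef) :
    ∃ c > 0, ∃ K > 0, ∀ j y w, qsrSupplyRate (Q j) (S j) (R j) y w ≤
      -c * (y ⬝ᵥ y) + K * (w ⬝ᵥ w) := by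
  choose ε hε hεQ using fun j => (hQ j).exists_pos_mul_dotProduct_self_le
  obtain ⟨ε₀, hε₀, hε₀_le⟩ := Finite.exists_pos_forall_le hε
  obtain ⟨K, hK⟩ := Finite.exists_le fun j =>
    2 / ε₀ * ∑ i, ∑ k, S j i k ^ 2 + (1 + ∑ i, ∑ k, R j i k ^ 2) / 2
  refine ⟨ε₀ / 2, half_pos hε₀, max K 1, by positivity, fun j y w => ?_⟩
  have hQj : ∀ y, y ⬝ᵥ (Q j *ᵥ y) ≤ -ε₀ * (y ⬝ᵥ y) := fun y => by
    have hεj := hεQ j y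
    rw [neg_mulVec, dotProduct_neg] at hεj
    linarith [mul_le_mul_of_nonneg_right (hε₀_le j) (dotProduct_self_nonneg y)]
  refine (qsrSupplyRate_le (S j) (R j) hε₀ hQj y w).trans ?_
  gcongr
  · exact dotProduct_self_nonneg w
  · exact (hK j).trans (le_max_left K 1)

end QuadraticBounds

lemma mul_integral_le_of_hasDerivAt_le {W W' f g : ℝ → ℝ} {a b c K : ℝ} (hab : a ≤ b)
    (hf : ContinuousOn f (Icc a b)) (hg : ContinuousOn g (Icc a b))
    (hW : ∀ t ∈ Icc a b, HasDerivAt W (W' t) t)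
    (hW' : ∀ t ∈ Icc a b, W' t ≤ -c * f t + K * g t) (hWb : 0 ≤ W b) :
    c * ∫ t in a..b, f t ≤ K * (∫ t in a..b, g t) + W a := by
  have hint := intervalIntegral.sub_le_integral_of_hasDeriv_right_of_le
    (φ := fun t => -c * f t + K * g t) hab
    (fun t ht => (hW t ht).continuousAt.continuousWithinAt)
    (fun t ht => (hW t (Ioo_subset_Icc_self ht)).hasDerivWithinAt)
    ((continuousOn_const.mul hf).add (continuousOn_const.mul hg)).integrableOn_Icc
    (fun t ht => hW' t (Ioo_subset_Icc_self ht))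
  rw [intervalIntegral.integral_add ((hf.intervalIntegrable_of_Icc hab).const_mul _)
    ((hg.intervalIntegrable_of_Icc hab).const_mul _), intervalIntegral.integral_const_mul,
    intervalIntegral.integral_const_mul] at hint
  linarith

theorem L2_stability_of_QSR_dissipative_switched_general
    {ι : Type*} [Fintype ι] {p q : ℕ}
    (Q : ι → Matrix (Fin q) (Fin q) ℝ)
    (S : ι → Matrix (Fin q) (Fin p) ℝ)
    (R : ι → Matrix (Fin p) (Fin p) ℝ)
    (hQneg : ∀ j, (-(Q j)).PosDef) :
    ∃ a > (0:ℝ), ∃ b > (0:ℝ),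
      ∀ (n : ℕ) (T : ℝ), 0 < T →
      ∀ (σ : ℝ → ι) (y : ℝ → Fin q → ℝ) (w : ℝ → Fin p → ℝ)
        (x : ℝ → Fin n → ℝ) (V : (Fin n → ℝ) → ℝ) (V' : ℝ → ℝ),
        ContinuousOn y (Set.Icc 0 T) →
        ContinuousOn w (Set.Icc 0 T) →
        (∀ z, 0 ≤ V z) →
        (∀ t ∈ Set.Icc (0:ℝ) T, HasDerivAt (fun s => V (x s)) (V' t) t) →
        (∀ t ∈ Set.Icc (0:ℝ) T,
          V' t ≤ y t ⬝ᵥ (Q (σ t) *ᵥ y t) + 2 * (y t ⬝ᵥ (S (σ t) *ᵥ w t))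
            + w t ⬝ᵥ (R (σ t) *ᵥ w t)) →
        (∫ t in (0:ℝ)..T, y t ⬝ᵥ y t) ≤
          a * (∫ t in (0:ℝ)..T, w t ⬝ᵥ w t) + b * V (x 0) := by
  obtain ⟨c, hc, K, hK, hsupply⟩ := exists_forall_qsrSupplyRate_le Q S R hQneg
  refine ⟨K / c, by positivity, c⁻¹, by positivity, ?_⟩
  intro n T hT σ y w x V V' hy hw hV hVx hdiss
  have hbound := mul_integral_le_of_hasDerivAt_le
    (f := fun t => y t ⬝ᵥ y t) (g := fun t => w t ⬝ᵥ w t) hT.le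
    ((continuous_id.dotProduct continuous_id).comp_continuousOn hy)
    ((continuous_id.dotProduct continuous_id).comp_continuousOn hw) hVx
    (fun t ht => (hdiss t ht).trans (hsupply (σ t) (y t) (w t))) (hV (x T))
  calc (∫ t in (0:ℝ)..T, y t ⬝ᵥ y t)
      = c⁻¹ * (c * ∫ t in (0:ℝ)..T, y t ⬝ᵥ y t) := by field_simp
    _ ≤ c⁻¹ * (K * (∫ t in (0:ℝ)..T, w t ⬝ᵥ w t) + V (x 0)) := by gcongr
    _ = K / c * (∫ t in (0:ℝ)..T, w t ⬝ᵥ w t) + c⁻¹ * V (x 0) := by ring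

/-- If every Q_j is symmetric negative definite (S_j, R_j
arbitrary with R_j symmetric), then there exist constants a, b > 0 depending
only on the family {Q_j, S_j, R_j} such that every trajectory of a switched
system which is dissipative with supply rate y'Q_σ y + 2 y'S_σ w + w'R_σ w and
nonnegative storage function V satisfies the L2 bound
∫₀ᵀ ‖y‖² ≤ a ∫₀ᵀ ‖w‖² + b V(x(0)); i.e. QSR-dissipativity with Q_j < 0 in
every mode implies L2 stability under arbitrary switching. -/
theorem L2_stability_of_QSR_dissipative_switched
    {ι : Type*} [Fintype ι] {p q : ℕ}
    (Q : ι → Matrix (Fin q) (Fin q) ℝ)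
    (S : ι → Matrix (Fin q) (Fin p) ℝ)
    (R : ι → Matrix (Fin p) (Fin p) ℝ)
    (hQsym : ∀ j, (Q j).IsSymm)
    (hQneg : ∀ j, (-(Q j)).PosDef)
    (hRsym : ∀ j, (R j).IsSymm) :
    ∃ a > (0:ℝ), ∃ b > (0:ℝ),
      ∀ (n : ℕ) (T : ℝ), 0 < T →
      ∀ (σ : ℝ → ι) (y : ℝ → Fin q → ℝ) (w : ℝ → Fin p → ℝ)
        (x : ℝ → Fin n → ℝ) (V : (Fin n → ℝ) → ℝ) (V' : ℝ → ℝ),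
        ContinuousOn y (Set.Icc 0 T) →
        ContinuousOn w (Set.Icc 0 T) →
        (∀ z, 0 ≤ V z) →
        (∀ t ∈ Set.Icc (0:ℝ) T, HasDerivAt (fun s => V (x s)) (V' t) t) →
        (∀ t ∈ Set.Icc (0:ℝ) T,
          V' t ≤ y t ⬝ᵥ (Q (σ t) *ᵥ y t) + 2 * (y t ⬝ᵥ (S (σ t) *ᵥ w t))
            + w t ⬝ᵥ (R (σ t) *ᵥ w t)) →
        (∫ t in (0:ℝ)..T, y t ⬝ᵥ y t) ≤
          a * (∫ t in (0:ℝ)..T, w t ⬝ᵥ w t) + b * V (x 0) :=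
  L2_stability_of_QSR_dissipative_switched_general Q S R hQneg
end

section
/- Suppose there exist a symmetric positive definite P ∈ ℝ^{n×n} and, for each j ∈ Σ, a symmetric Q_j ∈ ℝ^{q×q}, a matrix S_j ∈ ℝ^{q×p}, and a symmetric R_j ∈ ℝ^{p×p} such that the closed-loop dissipation matrix Γ_j formed with Â_j = A_j + B¹_jH and B̂_j = B²_j is positive definite (i.e., the linear approximation of the switched system is QSR-state strictly input dissipative with quadratic storage V(x) = x'Px in every mode). Then the nonlinear switched system is locally QSR-dissipative with the same dissipativity matrices and storage V(x) = x'Px: there exists ε > 0 such that for every j ∈ Σ and all x ∈ ℝ^n, w ∈ ℝ^p with ‖x‖ < ε and ‖w‖ < ε, setting y = g_j(x,w), one has y'Q_jy + 2y'S_jw + w'R_jw ≥ 2 x'P f_j(x, h(x), w). -/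
open Matrix

/-- Matrix–vector multiplication as a continuous linear map. -/
noncomputable def mulVecCLM {a b : ℕ} (A : Matrix (Fin a) (Fin b) ℝ) :
    (Fin b → ℝ) →L[ℝ] (Fin a → ℝ) :=
  LinearMap.toContinuousLinearMap (Matrix.mulVecLin A)

/-!
For the linearized closed loop, the gap between the supply rate and the derivative `2 x'P ẋ` of the
storage is exactly the quadratic form of `Γ` in `(x, w)`, hence at least `c ‖(x, w)‖²` by positive
definiteness. The nonlinear output and closed-loop vector field differ from their linearizations by
`o(‖(x, w)‖)`, which changes the gap only by `o(‖(x, w)‖²)`; so the gap stays nonnegative near the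
origin, and finitely many modes allow a common radius.
-/

open Asymptotics Filter Topology

@[simp]
theorem mulVecCLM_apply {a b : ℕ} (M : Matrix (Fin a) (Fin b) ℝ) (v : Fin b → ℝ) :
    mulVecCLM M v = M *ᵥ v :=
  rfl

theorem mulVecCLM_add {a b : ℕ} (M N : Matrix (Fin a) (Fin b) ℝ) :
    mulVecCLM (M + N) = mulVecCLM M + mulVecCLM N := by
  ext1 v; simp [add_mulVec]

theorem mulVecCLM_mul {a b c : ℕ} (M : Matrix (Fin a) (Fin b) ℝ) (N : Matrix (Fin b) (Fin c) ℝ) :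
    mulVecCLM (M * N) = mulVecCLM M ∘L mulVecCLM N := by
  ext1 v; simp [mulVec_mulVec]

section DotProduct

variable {κ : Type*} [Fintype κ]

theorem abs_dotProduct_le (a b : κ → ℝ) : |a ⬝ᵥ b| ≤ Fintype.card κ * (‖a‖ * ‖b‖) := by
  calc |∑ i, a i * b i| ≤ ∑ i, |a i| * |b i| := by
        simpa only [abs_mul] using Finset.abs_sum_le_sum_abs (fun i => a i * b i) Finset.univ
    _ ≤ ∑ _i : κ, ‖a‖ * ‖b‖ := by
        gcongr with i
        · exact norm_le_pi_norm a i
        · exact norm_le_pi_norm b i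
    _ = Fintype.card κ * (‖a‖ * ‖b‖) := by simp

variable {α E F : Type*} [SeminormedAddCommGroup E] [SeminormedAddCommGroup F] {l : Filter α}
  {a : α → E} {b : α → F} {u v : α → κ → ℝ}

theorem Asymptotics.IsLittleO.dotProduct_isBigO (hu : u =o[l] a) (hv : v =O[l] b) :
    (fun z => u z ⬝ᵥ v z) =o[l] fun z => ‖a z‖ * ‖b z‖ := by
  have hbound : (fun z => u z ⬝ᵥ v z) =O[l] fun z => ‖u z‖ * ‖v z‖ :=
    .of_bound (Fintype.card κ) (.of_forall fun z => by
      simpa [Real.norm_eq_abs, abs_mul] using abs_dotProduct_le (u z) (v z))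
  exact hbound.trans_isLittleO (hu.norm_norm.mul_isBigO hv.norm_norm)

theorem Asymptotics.IsBigO.dotProduct_isLittleO (hu : u =O[l] a) (hv : v =o[l] b) :
    (fun z => u z ⬝ᵥ v z) =o[l] fun z => ‖a z‖ * ‖b z‖ := by
  simpa only [dotProduct_comm (u _), mul_comm ‖a _‖] using hv.dotProduct_isBigO hu

end DotProduct

theorem Matrix.PosDef.exists_pos_mul_norm_sq_le {κ : Type*} [Fintype κ] {M : Matrix κ κ ℝ}
    (hM : M.PosDef) : ∃ c > 0, ∀ v : κ → ℝ, c * ‖v‖ ^ 2 ≤ v ⬝ᵥ (M *ᵥ v) := by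
  rcases isEmpty_or_nonempty κ with hκ | hκ
  · exact ⟨1, one_pos, fun v => by simp [Subsingleton.elim v 0]⟩
  have hcont : Continuous fun v : κ → ℝ => v ⬝ᵥ (M *ᵥ v) := by fun_prop
  obtain ⟨u₀, hu₀, hmin⟩ := (isCompact_sphere (0 : κ → ℝ) 1).exists_isMinOn
    (NormedSpace.sphere_nonempty.2 zero_le_one) hcont.continuousOn
  have hu₀pos : 0 < u₀ ⬝ᵥ (M *ᵥ u₀) := by
    simpa using hM.dotProduct_mulVec_pos (ne_zero_of_mem_unit_sphere ⟨u₀, hu₀⟩)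
  refine ⟨_, hu₀pos, fun v => ?_⟩
  rcases eq_or_ne v 0 with rfl | hv
  · simp
  have hnorm : 0 < ‖v‖ := norm_pos_iff.2 hv
  have hunit : ‖v‖⁻¹ • v ∈ Metric.sphere (0 : κ → ℝ) 1 := by simp [norm_smul, hnorm.ne']
  calc u₀ ⬝ᵥ (M *ᵥ u₀) * ‖v‖ ^ 2
      ≤ (‖v‖⁻¹ • v) ⬝ᵥ (M *ᵥ (‖v‖⁻¹ • v)) * ‖v‖ ^ 2 := by gcongr; exact hmin hunit
    _ = v ⬝ᵥ (M *ᵥ v) := by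
      simp only [mulVec_smul, smul_dotProduct, dotProduct_smul, smul_eq_mul]
      field_simp

theorem norm_sumElim {α β : Type*} [Fintype α] [Fintype β] (x : α → ℝ) (w : β → ℝ) :
    ‖Sum.elim x w‖ = ‖(x, w)‖ := by
  rw [← dist_zero_right, ← IsometryEquiv.sumArrowIsometryEquivProdArrow.dist_eq]
  simp [← Prod.zero_eq_mk]

def supplyRate {p q : ℕ} (Q : Matrix (Fin q) (Fin q) ℝ) (S : Matrix (Fin q) (Fin p) ℝ)
    (R : Matrix (Fin p) (Fin p) ℝ) (y : Fin q → ℝ) (w : Fin p → ℝ) : ℝ :=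
  y ⬝ᵥ (Q *ᵥ y) + 2 * (y ⬝ᵥ (S *ᵥ w)) + w ⬝ᵥ (R *ᵥ w)

section Mode

variable {n p q : ℕ} {P Ahat : Matrix (Fin n) (Fin n) ℝ} {Bhat : Matrix (Fin n) (Fin p) ℝ}
  {C : Matrix (Fin q) (Fin n) ℝ} {D : Matrix (Fin q) (Fin p) ℝ}
  {Q : Matrix (Fin q) (Fin q) ℝ} {S : Matrix (Fin q) (Fin p) ℝ} {R : Matrix (Fin p) (Fin p) ℝ}

theorem isLittleO_supplyRate_sub {α E : Type*} [SeminormedAddCommGroup E] {l : Filter α}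
    {g : α → E} {y y₀ : α → Fin q → ℝ} {w : α → Fin p → ℝ}
    (hy : (fun z => y z - y₀ z) =o[l] g) (hy₀ : y₀ =O[l] g) (hw : w =O[l] g) :
    (fun z => supplyRate Q S R (y z) (w z) - supplyRate Q S R (y₀ z) (w z))
      =o[l] fun z => ‖g z‖ * ‖g z‖ := by
  have hyO : y =O[l] g := by simpa using hy.isBigO.add hy₀
  have hQ := ((mulVecCLM Q).isBigO_comp _ l).trans hyO
  have hQ' := ((mulVecCLM Q).isBigO_comp _ l).trans_isLittleO hy
  have hS := ((mulVecCLM S).isBigO_comp _ l).trans hw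
  refine (((hy.dotProduct_isBigO hQ).add (hy₀.dotProduct_isLittleO hQ')).add
    ((hy.dotProduct_isBigO hS).const_mul_left 2)).congr_left fun z => ?_
  simp only [supplyRate, mulVecCLM_apply, mulVec_sub, sub_dotProduct, dotProduct_sub]
  ring

theorem dotProduct_dissipationMatrix_mulVec (hP : P.IsSymm) (hQ : Q.IsSymm)
    (x : Fin n → ℝ) (w : Fin p → ℝ) :
    Sum.elim x w ⬝ᵥ (dissipationMatrix P Ahat Bhat C D Q S R *ᵥ Sum.elim x w) =
      supplyRate Q S R (C *ᵥ x + D *ᵥ w) w - 2 * (x ⬝ᵥ (P *ᵥ (Ahat *ᵥ x + Bhat *ᵥ w))) := by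
  have transpose_mulVec {a b : ℕ} (M : Matrix (Fin a) (Fin b) ℝ) (x : Fin b → ℝ)
      (y : Fin a → ℝ) : x ⬝ᵥ (Mᵀ *ᵥ y) = (M *ᵥ x) ⬝ᵥ y := by
    rw [dotProduct_transpose_mulVec, dotProduct_comm]
  have hPsymm (a b : Fin n → ℝ) : a ⬝ᵥ (P *ᵥ b) = b ⬝ᵥ (P *ᵥ a) := by
    simpa only [hP.eq] using dotProduct_transpose_mulVec P a b
  simp only [dissipationMatrix, supplyRate, fromBlocks_mulVec, sumElim_dotProduct_sumElim,
    sub_mulVec, add_mulVec, transpose_add, transpose_sub, transpose_mul, transpose_transpose,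
    ← mulVec_mulVec, mulVec_add, dotProduct_add, add_dotProduct, dotProduct_sub,
    transpose_mulVec, hQ.eq, Sum.elim_comp_inl, Sum.elim_comp_inr]
  rw [hPsymm (Ahat *ᵥ x), dotProduct_comm (P *ᵥ _), dotProduct_comm (S *ᵥ w),
    dotProduct_comm (S *ᵥ w)]
  ring

theorem eventually_two_mul_dotProduct_le_supplyRate (hP : P.IsSymm) (hQ : Q.IsSymm)
    (hΓ : (dissipationMatrix P Ahat Bhat C D Q S R).PosDef)
    {y : (Fin n → ℝ) × (Fin p → ℝ) → Fin q → ℝ} {u : (Fin n → ℝ) × (Fin p → ℝ) → Fin n → ℝ}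
    (hy : HasFDerivAt y (mulVecCLM C ∘L .fst ℝ _ _ + mulVecCLM D ∘L .snd ℝ _ _) 0)
    (hy0 : y 0 = 0)
    (hu : HasFDerivAt u (mulVecCLM Ahat ∘L .fst ℝ _ _ + mulVecCLM Bhat ∘L .snd ℝ _ _) 0)
    (hu0 : u 0 = 0) :
    ∀ᶠ z in 𝓝 0, 2 * (z.1 ⬝ᵥ (P *ᵥ u z)) ≤ supplyRate Q S R (y z) z.2 := by
  obtain ⟨c, hc, hΓc⟩ := hΓ.exists_pos_mul_norm_sq_le
  have hy' := hasFDerivAt_iff_isLittleO_nhds_zero.1 hy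
  have hu' := hasFDerivAt_iff_isLittleO_nhds_zero.1 hu
  simp only [zero_add, hy0, hu0, sub_zero] at hy' hu'
  have hgap : (fun z : (Fin n → ℝ) × (Fin p → ℝ) =>
      supplyRate Q S R (y z) z.2 - 2 * (z.1 ⬝ᵥ (P *ᵥ u z)) -
        Sum.elim z.1 z.2 ⬝ᵥ (dissipationMatrix P Ahat Bhat C D Q S R *ᵥ Sum.elim z.1 z.2))
      =o[𝓝 0] fun z => ‖z‖ * ‖z‖ := by
    have hsupply := isLittleO_supplyRate_sub (Q := Q) (S := S) (R := R) hy'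
      (ContinuousLinearMap.isBigO_id _ _) (ContinuousLinearMap.isBigO_id (.snd ℝ _ _) _)
    have hstorage := (ContinuousLinearMap.isBigO_id (.fst ℝ _ _) _).dotProduct_isLittleO
      (((mulVecCLM P).isBigO_comp _ _).trans_isLittleO hu')
    refine (hsupply.sub (hstorage.const_mul_left 2)).congr_left fun z => ?_
    rw [dotProduct_dissipationMatrix_mulVec hP hQ]
    simp only [_root_.add_apply, ContinuousLinearMap.comp_apply, ContinuousLinearMap.coe_fst',
      ContinuousLinearMap.coe_snd', mulVecCLM_apply, mulVec_sub, dotProduct_sub]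
    ring
  filter_upwards [hgap.def hc] with z hz
  have hΓz := hΓc (Sum.elim z.1 z.2)
  rw [norm_sumElim, Prod.mk.eta] at hΓz
  rw [Real.norm_eq_abs, Real.norm_of_nonneg (by positivity), ← sq] at hz
  linarith [(abs_le.1 hz).1]

end Mode

section ClosedLoop

open ContinuousLinearMap

variable {E U W F : Type*} [NormedAddCommGroup E] [NormedSpace ℝ E] [NormedAddCommGroup U]
  [NormedSpace ℝ U] [NormedAddCommGroup W] [NormedSpace ℝ W] [NormedAddCommGroup F]
  [NormedSpace ℝ F]

theorem hasFDerivAt_feedback {f : E × U × W → F} {h : E → U} {A : E →L[ℝ] F}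
    {B₁ : U →L[ℝ] F} {B₂ : W →L[ℝ] F} {H : E →L[ℝ] U}
    (hf : HasFDerivAt f (A ∘L fst ℝ E (U × W) + B₁ ∘L (fst ℝ U W ∘L snd ℝ E (U × W))
      + B₂ ∘L (snd ℝ U W ∘L snd ℝ E (U × W))) 0)
    (hh : HasFDerivAt h H 0) (hh0 : h 0 = 0) :
    HasFDerivAt (fun z : E × W => f (z.1, h z.1, z.2))
      ((A + B₁ ∘L H) ∘L fst ℝ E W + B₂ ∘L snd ℝ E W) 0 := by
  have hψ : HasFDerivAt (fun z : E × W => (z.1, h z.1, z.2))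
      ((fst ℝ E W).prod ((H ∘L fst ℝ E W).prod (snd ℝ E W))) 0 :=
    hasFDerivAt_fst.prodMk ((hh.comp 0 hasFDerivAt_fst).prodMk hasFDerivAt_snd)
  have hψ0 : (0 : E × U × W) = ((0 : E × W).1, h (0 : E × W).1, (0 : E × W).2) := by
    rw [Prod.fst_zero, Prod.snd_zero, hh0]; rfl
  rw [hψ0] at hf
  refine (hf.comp 0 hψ).congr_fderiv (ContinuousLinearMap.ext fun z => ?_)
  simp

end ClosedLoop

theorem local_QSR_dissipativity_of_linearization_general
    {n m p q : ℕ} {ι : Type*} [Fintype ι]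
    (f : ι → ((Fin n → ℝ) × (Fin m → ℝ) × (Fin p → ℝ)) → (Fin n → ℝ))
    (g : ι → ((Fin n → ℝ) × (Fin p → ℝ)) → (Fin q → ℝ))
    (h : (Fin n → ℝ) → (Fin m → ℝ))
    (A : ι → Matrix (Fin n) (Fin n) ℝ)
    (B1 : ι → Matrix (Fin n) (Fin m) ℝ)
    (B2 : ι → Matrix (Fin n) (Fin p) ℝ)
    (C : ι → Matrix (Fin q) (Fin n) ℝ)
    (D : ι → Matrix (Fin q) (Fin p) ℝ)
    (H : Matrix (Fin m) (Fin n) ℝ)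
    (P : Matrix (Fin n) (Fin n) ℝ)
    (Q : ι → Matrix (Fin q) (Fin q) ℝ)
    (S : ι → Matrix (Fin q) (Fin p) ℝ)
    (R : ι → Matrix (Fin p) (Fin p) ℝ)
    (hf0 : ∀ j, f j (0, 0, 0) = 0)
    (hg0 : ∀ j, g j (0, 0) = 0)
    (hh0 : h 0 = 0)
    (hdf : ∀ j, HasFDerivAt (f j)
      ((mulVecCLM (A j)).comp
          (ContinuousLinearMap.fst ℝ (Fin n → ℝ) ((Fin m → ℝ) × (Fin p → ℝ)))
        + (mulVecCLM (B1 j)).comp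
          ((ContinuousLinearMap.fst ℝ (Fin m → ℝ) (Fin p → ℝ)).comp
            (ContinuousLinearMap.snd ℝ (Fin n → ℝ) ((Fin m → ℝ) × (Fin p → ℝ))))
        + (mulVecCLM (B2 j)).comp
          ((ContinuousLinearMap.snd ℝ (Fin m → ℝ) (Fin p → ℝ)).comp
            (ContinuousLinearMap.snd ℝ (Fin n → ℝ) ((Fin m → ℝ) × (Fin p → ℝ)))))
      (0, 0, 0))
    (hdg : ∀ j, HasFDerivAt (g j)
      ((mulVecCLM (C j)).comp
          (ContinuousLinearMap.fst ℝ (Fin n → ℝ) (Fin p → ℝ))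
        + (mulVecCLM (D j)).comp
          (ContinuousLinearMap.snd ℝ (Fin n → ℝ) (Fin p → ℝ)))
      (0, 0))
    (hdh : HasFDerivAt h (mulVecCLM H) 0)
    (hP : P.PosDef)
    (hQsym : ∀ j, (Q j).IsSymm)
    (hΓ : ∀ j, (dissipationMatrix P (A j + B1 j * H) (B2 j) (C j) (D j)
      (Q j) (S j) (R j)).PosDef) :
    ∃ ε > (0:ℝ), ∀ (j : ι) (x : Fin n → ℝ) (w : Fin p → ℝ),
      ‖x‖ < ε → ‖w‖ < ε →
      g j (x, w) ⬝ᵥ (Q j *ᵥ g j (x, w)) + 2 * (g j (x, w) ⬝ᵥ (S j *ᵥ w))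
        + w ⬝ᵥ (R j *ᵥ w)
      ≥ 2 * (x ⬝ᵥ (P *ᵥ f j (x, h x, w))) := by
  have hPsym : P.IsSymm := isHermitian_iff_isSymm.1 hP.isHermitian
  have hmode (j : ι) : ∀ᶠ z : (Fin n → ℝ) × (Fin p → ℝ) in 𝓝 0,
      2 * (z.1 ⬝ᵥ (P *ᵥ f j (z.1, h z.1, z.2))) ≤ supplyRate (Q j) (S j) (R j) (g j z) z.2 := by
    have hclosed := hasFDerivAt_feedback (hdf j) hdh hh0
    rw [← mulVecCLM_mul, ← mulVecCLM_add] at hclosed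
    exact eventually_two_mul_dotProduct_le_supplyRate hPsym (hQsym j) (hΓ j) (hdg j) (hg0 j)
      hclosed (by simp [hh0, hf0 j])
  obtain ⟨ε, hε, hball⟩ := Metric.eventually_nhds_iff_ball.1 (eventually_all.2 hmode)
  refine ⟨ε, hε, fun j x w hx hw => hball (x, w) ?_ j⟩
  simpa using max_lt hx hw

/-- If the linear approximation of the nonlinear switched
system is QSR-state strictly input dissipative in every mode with quadratic
storage V(x) = x'Px (i.e. the closed-loop dissipation matrix Γ_j built with
Â_j = A_j + B¹_jH, B̂_j = B²_j is positive definite), then the nonlinear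
switched system is locally QSR-dissipative with the same dissipativity
matrices and the same storage: there is ε > 0 such that for all j and all
‖x‖ < ε, ‖w‖ < ε, with y = g_j(x,w), one has
y'Q_jy + 2y'S_jw + w'R_jw ≥ 2 x'P f_j(x, h(x), w). -/
theorem local_QSR_dissipativity_of_linearization
    {n m p q : ℕ} {ι : Type*} [Fintype ι]
    (f : ι → ((Fin n → ℝ) × (Fin m → ℝ) × (Fin p → ℝ)) → (Fin n → ℝ))
    (g : ι → ((Fin n → ℝ) × (Fin p → ℝ)) → (Fin q → ℝ))
    (h : (Fin n → ℝ) → (Fin m → ℝ))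
    (A : ι → Matrix (Fin n) (Fin n) ℝ)
    (B1 : ι → Matrix (Fin n) (Fin m) ℝ)
    (B2 : ι → Matrix (Fin n) (Fin p) ℝ)
    (C : ι → Matrix (Fin q) (Fin n) ℝ)
    (D : ι → Matrix (Fin q) (Fin p) ℝ)
    (H : Matrix (Fin m) (Fin n) ℝ)
    (P : Matrix (Fin n) (Fin n) ℝ)
    (Q : ι → Matrix (Fin q) (Fin q) ℝ)
    (S : ι → Matrix (Fin q) (Fin p) ℝ)
    (R : ι → Matrix (Fin p) (Fin p) ℝ)
    (hf0 : ∀ j, f j (0, 0, 0) = 0)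
    (hg0 : ∀ j, g j (0, 0) = 0)
    (hh0 : h 0 = 0)
    (hdf : ∀ j, HasFDerivAt (f j)
      ((mulVecCLM (A j)).comp
          (ContinuousLinearMap.fst ℝ (Fin n → ℝ) ((Fin m → ℝ) × (Fin p → ℝ)))
        + (mulVecCLM (B1 j)).comp
          ((ContinuousLinearMap.fst ℝ (Fin m → ℝ) (Fin p → ℝ)).comp
            (ContinuousLinearMap.snd ℝ (Fin n → ℝ) ((Fin m → ℝ) × (Fin p → ℝ))))
        + (mulVecCLM (B2 j)).comp
          ((ContinuousLinearMap.snd ℝ (Fin m → ℝ) (Fin p → ℝ)).comp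
            (ContinuousLinearMap.snd ℝ (Fin n → ℝ) ((Fin m → ℝ) × (Fin p → ℝ)))))
      (0, 0, 0))
    (hdg : ∀ j, HasFDerivAt (g j)
      ((mulVecCLM (C j)).comp
          (ContinuousLinearMap.fst ℝ (Fin n → ℝ) (Fin p → ℝ))
        + (mulVecCLM (D j)).comp
          (ContinuousLinearMap.snd ℝ (Fin n → ℝ) (Fin p → ℝ)))
      (0, 0))
    (hdh : HasFDerivAt h (mulVecCLM H) 0)
    (hP : P.PosDef)
    (hQsym : ∀ j, (Q j).IsSymm)
    (hRsym : ∀ j, (R j).IsSymm)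
    (hΓ : ∀ j, (dissipationMatrix P (A j + B1 j * H) (B2 j) (C j) (D j)
      (Q j) (S j) (R j)).PosDef) :
    ∃ ε > (0:ℝ), ∀ (j : ι) (x : Fin n → ℝ) (w : Fin p → ℝ),
      ‖x‖ < ε → ‖w‖ < ε →
      g j (x, w) ⬝ᵥ (Q j *ᵥ g j (x, w)) + 2 * (g j (x, w) ⬝ᵥ (S j *ᵥ w))
        + w ⬝ᵥ (R j *ᵥ w)
      ≥ 2 * (x ⬝ᵥ (P *ᵥ f j (x, h x, w))) :=
  local_QSR_dissipativity_of_linearization_general f g h A B1 B2 C D H P Q S R hf0 hg0 hh0 hdf hdg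
    hdh hP hQsym hΓ
end

section
/- Let Σ be a finite set of modes and, for each j ∈ Σ, let γ_j ≥ 0 be a scalar robustness margin. Suppose that for every j ∈ Σ: (i) the perturbed design LMI matrix M̂_j, obtained from the design LMI matrix M_j by replacing its (1,1) block M₁₁ with M₁₁ − 2γ_jP, is positive definite; (ii) P B¹_j = B¹_j V_j with V_j ∈ ℝ^{m×m} invertible; and set K_j = V_j⁻¹U_j. Then for every perturbation ΔĤ ∈ ℝ^{m×n} satisfying the Loewner-order bounds −2γ_jP ⪯ P B¹_jΔĤ + (B¹_jΔĤ)'P ⪯ 2γ_jP for all j ∈ Σ, and writing H_new = H − ΔĤ, the design LMI matrix built with H_new in place of H is positive definite for every j, and consequently the closed-loop dissipation matrix Γ_j formed with Â_j = A_j + B¹_jH_new + B¹_jK_jC_j and B̂_j = B²_j + B¹_jK_jD_j is positive definite for every j ∈ Σ; i.e., the same fixed controller gains K_j render the closed-loop linearized switched system QSR-state strictly input dissipative (with storage V(x) = x'Px) for every new network topology whose Jacobian perturbation obeys these bounds. -/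
open Matrix

/-!
Replacing `H` by `H - ΔH` changes only the `(1,1)` block of the design LMI matrix, by
`P B¹ ΔH + (B¹ ΔH)' P`; hence `M(H - ΔH) = M̂ + diag(P B¹ ΔH + (B¹ ΔH)' P + 2γP, 0)`, a positive
definite matrix plus a positive semidefinite one. The dissipation matrix is then the congruence
`Γ = E' M E` with the injective map `E (x, w) = (x, w, L (C x + D w))`: `L L = -Q` turns the
`C' L` columns into the `C' Q C`, `C' Q D`, `D' Q D` terms, and `P B¹ K = B¹ U` (from
`P B¹ = B¹ V`) turns the `B¹ U` terms of `M` into the closed-loop `P B¹ K` terms of `Γ`.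
-/

namespace Matrix

variable {R : Type*} [Ring R] [PartialOrder R] [StarRing R] {m n : Type*} [Fintype m]
  [Fintype n] [DecidableEq m]

theorem PosSemidef.fromBlocks_zero₂₂ {A : Matrix m m R} (hA : A.PosSemidef) :
    (fromBlocks A 0 0 (0 : Matrix n n R)).PosSemidef := by
  simpa [conjTranspose_fromCols_eq_fromRows_conjTranspose, fromRows_mul, mul_fromCols,
    ← fromCols_fromRows_eq_fromBlocks] using
    hA.conjTranspose_mul_mul_same (fromCols (1 : Matrix m m R) (0 : Matrix m n R))

theorem mul_mul_nonsing_inv_mul_of_mul_eq {S : Type*} [CommRing S] {l k : Type*} [Fintype l]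
    {P : Matrix l l S} {B : Matrix l m S} {V : Matrix m m S} (hPB : P * B = B * V)
    (hV : IsUnit V) (U : Matrix m k S) : P * (B * (V⁻¹ * U)) = B * U := by
  rw [← Matrix.mul_assoc, hPB, Matrix.mul_assoc, ← Matrix.mul_assoc V,
    mul_nonsing_inv _ ((isUnit_iff_isUnit_det V).mp hV), Matrix.one_mul]

end Matrix

section ClosedLoop

variable {n m p q : ℕ}

def designCongruence (C : Matrix (Fin q) (Fin n) ℝ) (D : Matrix (Fin q) (Fin p) ℝ)
    (L : Matrix (Fin q) (Fin q) ℝ) : Matrix (Fin n ⊕ (Fin p ⊕ Fin q)) (Fin n ⊕ Fin p) ℝ :=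
  fromBlocks 1 0 (fromRows 0 (L * C)) (fromRows 1 (L * D))

variable {P A : Matrix (Fin n) (Fin n) ℝ} {B1 : Matrix (Fin n) (Fin m) ℝ}
  {B2 : Matrix (Fin n) (Fin p) ℝ} {C : Matrix (Fin q) (Fin n) ℝ} {D : Matrix (Fin q) (Fin p) ℝ}
  {H : Matrix (Fin m) (Fin n) ℝ} {U : Matrix (Fin m) (Fin q) ℝ} {S : Matrix (Fin q) (Fin p) ℝ}
  {R : Matrix (Fin p) (Fin p) ℝ} {L : Matrix (Fin q) (Fin q) ℝ}

theorem designLMI_sub_eq_add (ΔH : Matrix (Fin m) (Fin n) ℝ) :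
    designLMI P A B1 B2 C D (H - ΔH) U S R L =
      designLMI P A B1 B2 C D H U S R L +
        fromBlocks (P * (B1 * ΔH) + (B1 * ΔH)ᵀ * P) 0 0 0 := by
  simp only [designLMI, fromBlocks_add, add_zero]
  congr 1
  simp only [Matrix.mul_sub, Matrix.mul_add, Matrix.add_mul, Matrix.sub_mul,
    transpose_sub, transpose_add, Matrix.mul_assoc]
  abel

theorem posDef_designLMI_sub {c : ℝ} {ΔH : Matrix (Fin m) (Fin n) ℝ}
    (hM : (designLMI P A B1 B2 C D H U S R L - fromBlocks (c • P) 0 0 0).PosDef)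
    (hΔH : (P * (B1 * ΔH) + (B1 * ΔH)ᵀ * P + c • P).PosSemidef) :
    (designLMI P A B1 B2 C D (H - ΔH) U S R L).PosDef := by
  have hsplit : designLMI P A B1 B2 C D (H - ΔH) U S R L =
      (designLMI P A B1 B2 C D H U S R L - fromBlocks (c • P) 0 0 0) +
        fromBlocks (P * (B1 * ΔH) + (B1 * ΔH)ᵀ * P + c • P) 0 0 0 := by
    rw [designLMI_sub_eq_add, sub_eq_add_neg, fromBlocks_neg, add_assoc, fromBlocks_add]
    simp only [neg_add_cancel_comm_assoc, neg_zero, add_zero]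
  rw [hsplit]
  exact hM.add_posSemidef hΔH.fromBlocks_zero₂₂

theorem mulVec_injective_designCongruence :
    Function.Injective (designCongruence C D L).mulVec := by
  let G : Matrix (Fin n ⊕ Fin p) (Fin n ⊕ (Fin p ⊕ Fin q)) ℝ :=
    fromBlocks 1 (fromCols 0 0) 0 (fromCols 1 0)
  have hG : G * designCongruence C D L = 1 := by
    simp only [G, designCongruence, fromBlocks_multiply, fromCols_mul_fromRows, fromCols_zero,
      fromBlocks_one, Matrix.mul_one, Matrix.mul_zero, Matrix.zero_mul, add_zero, zero_add]
  intro x y hxy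
  simpa only [mulVec_mulVec, hG, one_mulVec] using congrArg (G *ᵥ ·) hxy

theorem transpose_mul_designLMI_mul_designCongruence {Q : Matrix (Fin q) (Fin q) ℝ}
    {K : Matrix (Fin m) (Fin q) ℝ} (hP : P.IsSymm) (hQ : Q.IsSymm) (hL : L.IsSymm)
    (hLL : L * L = -Q) (hK : P * (B1 * K) = B1 * U) :
    (designCongruence C D L)ᵀ * designLMI P A B1 B2 C D H U S R L * designCongruence C D L =
      dissipationMatrix P (A + B1 * H + B1 * K * C) (B2 + B1 * K * D) C D Q S R := by
  have hKt : Kᵀ * (B1ᵀ * P) = Uᵀ * B1ᵀ := by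
    simpa only [transpose_mul, hP.eq, Matrix.mul_assoc] using congrArg transpose hK
  have hLLX {k : Type} [Fintype k] (X : Matrix (Fin q) k ℝ) : L * (L * X) = -(Q * X) := by
    simpa only [Matrix.mul_assoc, Matrix.neg_mul] using congrArg (· * X) hLL
  have hKX {k : Type} [Fintype k] (X : Matrix (Fin q) k ℝ) :
      P * (B1 * (K * X)) = B1 * (U * X) := by
    simpa only [Matrix.mul_assoc] using congrArg (· * X) hK
  simp only [designCongruence, designLMI, dissipationMatrix, fromBlocks_transpose,
    transpose_fromRows, transpose_zero, transpose_one, fromBlocks_multiply,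
    fromCols_mul_fromRows, fromCols_mul_fromBlocks, Matrix.mul_add, Matrix.add_mul,
    Matrix.mul_one, Matrix.one_mul, Matrix.mul_zero, Matrix.zero_mul, add_zero, zero_add,
    fromBlocks_inj]
  refine ⟨?_, ?_, ?_, ?_⟩ <;>
  · simp only [transpose_sub, transpose_add, transpose_neg, transpose_mul, transpose_transpose,
      hP.eq, hL.eq, hQ.eq, Matrix.add_mul, Matrix.neg_mul, Matrix.mul_neg, Matrix.mul_assoc,
      hKX, hKt, hLLX]
    abel

theorem posDef_dissipationMatrix_of_posDef_designLMI {Q : Matrix (Fin q) (Fin q) ℝ}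
    {K : Matrix (Fin m) (Fin q) ℝ} (hP : P.IsSymm) (hQ : Q.IsSymm) (hL : L.IsSymm)
    (hLL : L * L = -Q) (hK : P * (B1 * K) = B1 * U)
    (hM : (designLMI P A B1 B2 C D H U S R L).PosDef) :
    (dissipationMatrix P (A + B1 * H + B1 * K * C) (B2 + B1 * K * D) C D Q S R).PosDef := by
  rw [← transpose_mul_designLMI_mul_designCongruence hP hQ hL hLL hK,
    ← conjTranspose_eq_transpose_of_trivial]
  exact hM.conjTranspose_mul_mul_same mulVec_injective_designCongruence

end ClosedLoop

theorem robust_design_LMI_topology_change_general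
    {n m p q : ℕ} {ι : Type*}
    (P : Matrix (Fin n) (Fin n) ℝ)
    (A : ι → Matrix (Fin n) (Fin n) ℝ)
    (B1 : ι → Matrix (Fin n) (Fin m) ℝ)
    (B2 : ι → Matrix (Fin n) (Fin p) ℝ)
    (C : ι → Matrix (Fin q) (Fin n) ℝ)
    (D : ι → Matrix (Fin q) (Fin p) ℝ)
    (H : Matrix (Fin m) (Fin n) ℝ)
    (U : ι → Matrix (Fin m) (Fin q) ℝ)
    (V : ι → Matrix (Fin m) (Fin m) ℝ)
    (Q : ι → Matrix (Fin q) (Fin q) ℝ)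
    (S : ι → Matrix (Fin q) (Fin p) ℝ)
    (R : ι → Matrix (Fin p) (Fin p) ℝ)
    (L : ι → Matrix (Fin q) (Fin q) ℝ)
    (γ : ι → ℝ)
    (hP : P.PosDef)
    (hQsym : ∀ j, (Q j).IsSymm)
    (hLsym : ∀ j, (L j).IsSymm)
    (hLL : ∀ j, L j * L j = -(Q j))
    (hMhat : ∀ j,
      (designLMI P (A j) (B1 j) (B2 j) (C j) (D j) H (U j) (S j) (R j) (L j)
        - Matrix.fromBlocks ((2 * γ j) • P) 0 0 0).PosDef)
    (hPB : ∀ j, P * B1 j = B1 j * V j)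
    (hV : ∀ j, IsUnit (V j)) :
    ∀ ΔH : Matrix (Fin m) (Fin n) ℝ,
      (∀ j, ((2 * γ j) • P - (P * (B1 j * ΔH) + (B1 j * ΔH)ᵀ * P)).PosSemidef ∧
        ((P * (B1 j * ΔH) + (B1 j * ΔH)ᵀ * P) + (2 * γ j) • P).PosSemidef) →
      ∀ j,
        (designLMI P (A j) (B1 j) (B2 j) (C j) (D j) (H - ΔH) (U j) (S j)
          (R j) (L j)).PosDef ∧
        (dissipationMatrix P
          (A j + B1 j * (H - ΔH) + B1 j * ((V j)⁻¹ * U j) * C j)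
          (B2 j + B1 j * ((V j)⁻¹ * U j) * D j)
          (C j) (D j) (Q j) (S j) (R j)).PosDef := by
  intro ΔH hΔH j
  have hM := posDef_designLMI_sub (hMhat j) (hΔH j).2
  exact ⟨hM, posDef_dissipationMatrix_of_posDef_designLMI
    (isHermitian_iff_isSymm.mp hP.isHermitian) (hQsym j) (hLsym j) (hLL j)
    (mul_mul_nonsing_inv_mul_of_mul_eq (hPB j) (hV j) (U j)) hM⟩

/-- Suppose for every mode j the perturbed design LMI matrix
M̂_j (M_j with its (1,1) block replaced by M₁₁ − 2γ_jP) is positive definite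
and P B¹_j = B¹_j V_j with V_j invertible; set K_j = V_j⁻¹U_j. Then for every
perturbation ΔĤ with −2γ_jP ⪯ P B¹_jΔĤ + (B¹_jΔĤ)'P ⪯ 2γ_jP for all j, and
H_new = H − ΔĤ, the design LMI matrix built with H_new is positive definite,
and consequently the closed-loop dissipation matrix with
Â_j = A_j + B¹_jH_new + B¹_jK_jC_j, B̂_j = B²_j + B¹_jK_jD_j is positive
definite for every j. -/
theorem robust_design_LMI_topology_change
    {n m p q : ℕ} {ι : Type*} [Fintype ι]
    (P : Matrix (Fin n) (Fin n) ℝ)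
    (A : ι → Matrix (Fin n) (Fin n) ℝ)
    (B1 : ι → Matrix (Fin n) (Fin m) ℝ)
    (B2 : ι → Matrix (Fin n) (Fin p) ℝ)
    (C : ι → Matrix (Fin q) (Fin n) ℝ)
    (D : ι → Matrix (Fin q) (Fin p) ℝ)
    (H : Matrix (Fin m) (Fin n) ℝ)
    (U : ι → Matrix (Fin m) (Fin q) ℝ)
    (V : ι → Matrix (Fin m) (Fin m) ℝ)
    (Q : ι → Matrix (Fin q) (Fin q) ℝ)
    (S : ι → Matrix (Fin q) (Fin p) ℝ)
    (R : ι → Matrix (Fin p) (Fin p) ℝ)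
    (L : ι → Matrix (Fin q) (Fin q) ℝ)
    (γ : ι → ℝ)
    (hγ : ∀ j, 0 ≤ γ j)
    (hP : P.PosDef)
    (hQsym : ∀ j, (Q j).IsSymm)
    (hQneg : ∀ j, (-(Q j)).PosDef)
    (hRsym : ∀ j, (R j).IsSymm)
    (hLsym : ∀ j, (L j).IsSymm)
    (hLL : ∀ j, L j * L j = -(Q j))
    (hMhat : ∀ j,
      (designLMI P (A j) (B1 j) (B2 j) (C j) (D j) H (U j) (S j) (R j) (L j)
        - Matrix.fromBlocks ((2 * γ j) • P) 0 0 0).PosDef)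
    (hPB : ∀ j, P * B1 j = B1 j * V j)
    (hV : ∀ j, IsUnit (V j)) :
    ∀ ΔH : Matrix (Fin m) (Fin n) ℝ,
      (∀ j, ((2 * γ j) • P - (P * (B1 j * ΔH) + (B1 j * ΔH)ᵀ * P)).PosSemidef ∧
        ((P * (B1 j * ΔH) + (B1 j * ΔH)ᵀ * P) + (2 * γ j) • P).PosSemidef) →
      ∀ j,
        (designLMI P (A j) (B1 j) (B2 j) (C j) (D j) (H - ΔH) (U j) (S j)
          (R j) (L j)).PosDef ∧
        (dissipationMatrix P
          (A j + B1 j * (H - ΔH) + B1 j * ((V j)⁻¹ * U j) * C j)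
          (B2 j + B1 j * ((V j)⁻¹ * U j) * D j)
          (C j) (D j) (Q j) (S j) (R j)).PosDef :=
  robust_design_LMI_topology_change_general P A B1 B2 C D H U V Q S R L γ hP hQsym hLsym hLL hMhat
    hPB hV
end
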